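/- arXiv:2112.09528 — 2 statements merged into one kernel-verified Lean document; each statement's English description precedes it below -/
import Mathlib

section
/- For every pair (p, H) \in \mathbb{C}^2 there exists a unique formal Laurent series solution of y'' = 6y^2 + t of the form y(t) = (t-p)^{-2} - \frac{p}{10}(t-p)^2 - \frac16 (t-p)^3 + H (t-p)^4 + \sum_{n \ge 5} a_n (t-p)^n; i.e., all coefficients a_n for n \ge 5 are uniquely determined by p and H via the recursion induced by the equation. -/
noncomputable def pb (p H : ℂ) : ℕ → ℂ
  | 0 => 1
  | 1 => 0
  | 2 => 0
  | 3 => 0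
  | 4 => -p/10
  | 5 => -1/6
  | 6 => H
  | (k+7) => (6 * ∑ i ∈ (Finset.range (k+6)).attach,
      pb p H (i.1+1) * pb p H (k+6-i.1)) / (((k:ℂ)+8)*((k:ℂ)+1))
decreasing_by
  · have := Finset.mem_range.mp i.2; omega
  · omega

lemma pb_rec (p H : ℂ) (m : ℕ) :
    pb p H (m+7) = 6 * (∑ i ∈ Finset.range (m+6), pb p H (i+1) * pb p H (m+6-i)) /
      (((m:ℂ)+8)*((m:ℂ)+1)) := by
  rw [pb]
  rw [Finset.sum_attach (Finset.range (m+6)) (fun i => pb p H (i+1) * pb p H (m+6-i))]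

lemma pb_conv (p H : ℂ) (m : ℕ) :
    (((m:ℂ)+5)*((m:ℂ)+4)) * pb p H (m+7) =
      6 * ∑ i ∈ Finset.range (m+8), pb p H i * pb p H (m+7-i) := by
  have h1 : ∑ i ∈ Finset.range (m+8), pb p H i * pb p H (m+7-i)
      = 2 * pb p H (m+7) + ∑ i ∈ Finset.range (m+6), pb p H (i+1) * pb p H (m+6-i) := by
    rw [Finset.sum_range_succ, Finset.sum_range_succ']
    have h0 : pb p H 0 = 1 := by rw [pb]
    have : ∀ i ∈ Finset.range (m+6), pb p H (i+1) * pb p H (m+7-(i+1))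
        = pb p H (i+1) * pb p H (m+6-i) := by
      intro i hi; congr 2; omega
    rw [Finset.sum_congr rfl this]
    simp [h0]
    ring
  rw [h1, pb_rec]
  have hm8 : ((m:ℂ)+8) ≠ 0 := by
    have : ((m:ℂ)+8) = ((m+8 : ℕ):ℂ) := by push_cast; ring
    rw [this]; exact Nat.cast_ne_zero.mpr (by omega)
  have hm1 : ((m:ℂ)+1) ≠ 0 := by
    have : ((m:ℂ)+1) = ((m+1 : ℕ):ℂ) := by push_cast; ring
    rw [this]; exact Nat.cast_ne_zero.mpr (by omega)
  field_simp
  ring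

noncomputable def pa (p H : ℂ) (m : ℤ) : ℂ :=
  if -2 ≤ m then pb p H (m + 2).toNat else 0

lemma pa_reindex (p H : ℂ) (k : ℕ) :
    ∑ j ∈ Finset.Icc (-2 : ℤ) ((k:ℤ) - 2), pa p H j * pa p H ((k:ℤ) - 4 - j)
      = ∑ i ∈ Finset.range (k+1), pb p H i * pb p H (k-i) := by
  refine Finset.sum_nbij' (fun j => (j+2).toNat) (fun i => (i:ℤ) - 2) ?_ ?_ ?_ ?_ ?_
  · intro j hj
    simp only [Finset.mem_Icc] at hj
    simp only [Finset.mem_range]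
    omega
  · intro i hi
    simp only [Finset.mem_range] at hi
    simp only [Finset.mem_Icc]
    omega
  · intro j hj
    simp only [Finset.mem_Icc] at hj
    omega
  · intro i hi
    simp only [Finset.mem_range] at hi
    omega
  · intro j hj
    simp only [Finset.mem_Icc] at hj
    rw [pa, pa, if_pos hj.1, if_pos (by omega : (-2:ℤ) ≤ (k:ℤ) - 4 - j)]
    congr 2
    omega

variable (p H : ℂ)

lemma pa_neg (m : ℤ) (h : m < -2) : pa p H m = 0 := by rw [pa, if_neg (by omega)]
lemma pa_m2 : pa p H (-2) = 1 := by
  rw [pa, if_pos (by norm_num), show ((-2:ℤ)+2).toNat = 0 from rfl, pb]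
lemma pa_m1 : pa p H (-1) = 0 := by
  rw [pa, if_pos (by norm_num), show ((-1:ℤ)+2).toNat = 1 from rfl, pb]
lemma pa_0 : pa p H 0 = 0 := by
  rw [pa, if_pos (by norm_num), show ((0:ℤ)+2).toNat = 2 from rfl, pb]
lemma pa_1 : pa p H 1 = 0 := by
  rw [pa, if_pos (by norm_num), show ((1:ℤ)+2).toNat = 3 from rfl, pb]
lemma pa_2 : pa p H 2 = -p/10 := by
  rw [pa, if_pos (by norm_num), show ((2:ℤ)+2).toNat = 4 from rfl, pb]
lemma pa_3 : pa p H 3 = -1/6 := by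
  rw [pa, if_pos (by norm_num), show ((3:ℤ)+2).toNat = 5 from rfl, pb]
lemma pa_4 : pa p H 4 = H := by
  rw [pa, if_pos (by norm_num), show ((4:ℤ)+2).toNat = 6 from rfl, pb]

/-- pa satisfies the recursion. -/
lemma pa_rec (n : ℤ) :
    ((n : ℂ) + 2) * ((n : ℂ) + 1) * pa p H (n + 2) =
      6 * (∑ j ∈ Finset.Icc (-2 : ℤ) (n + 2), pa p H j * pa p H (n - j)) +
        (if n = 0 then p else if n = 1 then 1 else 0) := by
  rcases le_or_gt 3 n with hn | hn
  · -- main case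
    obtain ⟨m, rfl⟩ : ∃ m : ℕ, n = (m:ℤ) + 3 := ⟨(n-3).toNat, by omega⟩
    rw [if_neg (by omega), if_neg (by omega), add_zero]
    have h1 : pa p H ((m:ℤ)+3+2) = pb p H (m+7) := by
      rw [pa, if_pos (by omega), show ((m:ℤ)+3+2+2).toNat = m+7 by omega]
    have e1 : (m:ℤ)+3+2 = ((m+7 : ℕ):ℤ) - 2 := by push_cast; ring
    have h2 : ∑ j ∈ Finset.Icc (-2:ℤ) ((m:ℤ)+3+2), pa p H j * pa p H ((m:ℤ)+3-j)
        = ∑ i ∈ Finset.range (m+8), pb p H i * pb p H (m+7-i) := by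
      rw [e1]
      rw [Finset.sum_congr rfl (fun j _ => by
        rw [show (m:ℤ)+3-j = ((m+7:ℕ):ℤ) - 4 - j by push_cast; ring])]
      exact pa_reindex p H (m+7)
    rw [h1, h2]
    have := pb_conv p H m
    push_cast
    push_cast at this
    linear_combination this
  · -- small cases
    rcases le_or_gt n (-5) with h5 | h5
    · rw [show Finset.Icc (-2:ℤ) (n+2) = ∅ from Finset.Icc_eq_empty (by omega),
        pa_neg p H _ (by omega), if_neg (by omega), if_neg (by omega)]
      simp
    have hlb : -4 ≤ n := by omega
    interval_cases n
    · -- n = -4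
      rw [show Finset.Icc (-2:ℤ) (-4+2) = {-2} by decide]
      norm_num [pa_m2]
    · -- n = -3
      rw [show Finset.Icc (-2:ℤ) (-3+2) = {-2,-1} by decide]
      norm_num [pa_m2, pa_m1]
    · -- n = -2
      rw [show Finset.Icc (-2:ℤ) (-2+2) = {-2,-1,0} by decide]
      norm_num [pa_m2, pa_m1, pa_0]
    · -- n = -1
      rw [show Finset.Icc (-2:ℤ) (-1+2) = {-2,-1,0,1} by decide]
      norm_num [pa_m2, pa_m1, pa_0, pa_1]
    · -- n = 0
      rw [show Finset.Icc (-2:ℤ) (0+2) = {-2,-1,0,1,2} by decide]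
      norm_num [pa_m2, pa_m1, pa_0, pa_1, pa_2]
      ring
    · -- n = 1
      rw [show Finset.Icc (-2:ℤ) (1+2) = {-2,-1,0,1,2,3} by decide]
      norm_num [pa_m2, pa_m1, pa_0, pa_1, pa_2, pa_3]
    · -- n = 2
      rw [show Finset.Icc (-2:ℤ) (2+2) = {-2,-1,0,1,2,3,4} by decide]
      norm_num [pa_m2, pa_m1, pa_0, pa_1, pa_2, pa_3, pa_4]
      ring

/-- For every pair `(p, H) ∈ ℂ²` there is a unique formal Laurent series solution
`y(t) = (t-p)⁻² - (p/10)(t-p)² - (1/6)(t-p)³ + H (t-p)⁴ + ∑_{n ≥ 5} a n (t-p)^n`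
of the first Painlevé equation `y'' = 6 y² + t`; all coefficients `a n`, `n ≥ 5`,
are uniquely determined by `p` and `H` via the recursion induced by the equation.
The equation is encoded coefficient-wise as in the Cauchy-product convolution. -/
theorem stmt_2 (p H : ℂ) :
    ∃! a : ℤ → ℂ,
      (∀ n : ℤ, n < -2 → a n = 0) ∧
      a (-2) = 1 ∧ a (-1) = 0 ∧ a 0 = 0 ∧ a 1 = 0 ∧
      a 2 = -p / 10 ∧ a 3 = -1 / 6 ∧ a 4 = H ∧
      (∀ n : ℤ,
        ((n : ℂ) + 2) * ((n : ℂ) + 1) * a (n + 2) =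
          6 * (∑ j ∈ Finset.Icc (-2 : ℤ) (n + 2), a j * a (n - j)) +
            (if n = 0 then p else if n = 1 then 1 else 0)) := by
  have key : ∀ x : ℤ → ℂ,
      ((∀ n : ℤ, n < -2 → x n = 0) ∧
      x (-2) = 1 ∧ x (-1) = 0 ∧ x 0 = 0 ∧ x 1 = 0 ∧
      x 2 = -p / 10 ∧ x 3 = -1 / 6 ∧ x 4 = H ∧
      (∀ n : ℤ,
        ((n : ℂ) + 2) * ((n : ℂ) + 1) * x (n + 2) =
          6 * (∑ j ∈ Finset.Icc (-2 : ℤ) (n + 2), x j * x (n - j)) +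
            (if n = 0 then p else if n = 1 then 1 else 0))) →
      ∀ m : ℤ, 5 ≤ m →
        ((m:ℂ)*((m:ℂ)-1) - 12) * x m
          = 6 * ∑ j ∈ Finset.Icc (-1:ℤ) (m-1), x j * x (m-2-j) := by
    rintro x ⟨h0, hm2, -, -, -, -, -, -, hrec⟩ m hm
    have h := hrec (m-2)
    rw [if_neg (by omega), if_neg (by omega), add_zero] at h
    have hsplit : Finset.Icc (-2:ℤ) (m-2+2)
        = insert (-2) (insert m (Finset.Icc (-1) (m-1))) := by
      ext j; simp only [Finset.mem_Icc, Finset.mem_insert]; omega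
    rw [hsplit, Finset.sum_insert (by simp only [Finset.mem_insert, Finset.mem_Icc]; omega),
      Finset.sum_insert (by simp only [Finset.mem_Icc]; omega)] at h
    rw [show m-2-(-2) = m by ring, show m-2+2 = m by ring, show m-2-m = (-2:ℤ) by ring,
      hm2] at h
    push_cast at h
    linear_combination h
  have hA : (∀ n : ℤ, n < -2 → pa p H n = 0) ∧
      pa p H (-2) = 1 ∧ pa p H (-1) = 0 ∧ pa p H 0 = 0 ∧ pa p H 1 = 0 ∧
      pa p H 2 = -p / 10 ∧ pa p H 3 = -1 / 6 ∧ pa p H 4 = H ∧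
      (∀ n : ℤ,
        ((n : ℂ) + 2) * ((n : ℂ) + 1) * pa p H (n + 2) =
          6 * (∑ j ∈ Finset.Icc (-2 : ℤ) (n + 2), pa p H j * pa p H (n - j)) +
            (if n = 0 then p else if n = 1 then 1 else 0)) :=
    ⟨fun n hn => pa_neg p H n hn, pa_m2 p H, pa_m1 p H, pa_0 p H, pa_1 p H,
      by rw [pa_2 p H], pa_3 p H, pa_4 p H, pa_rec p H⟩
  refine ⟨pa p H, hA, fun a ha => ?_⟩
  obtain ⟨h0, hm2, hm1v, h0v, h1v, h2v, h3v, h4v, hrec⟩ := ha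
  have main : ∀ N : ℕ, ∀ m : ℤ, m + 2 ≤ (N:ℤ) → a m = pa p H m := by
    intro N
    induction N with
    | zero =>
        intro m hm
        push_cast at hm
        rcases lt_or_ge m (-2) with h | h
        · rw [h0 m h, pa_neg p H m h]
        · obtain rfl : m = -2 := by omega
          rw [hm2, pa_m2]
    | succ N ih =>
        intro m hm
        push_cast at hm
        rcases lt_or_ge m (-2) with h | h
        · rw [h0 m h, pa_neg p H m h]
        rcases le_or_gt m 4 with h4 | h5
        · interval_cases m
          · rw [hm2, pa_m2]
          · rw [hm1v, pa_m1]
          · rw [h0v, pa_0]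
          · rw [h1v, pa_1]
          · rw [h2v, pa_2]
          · rw [h3v, pa_3]
          · rw [h4v, pa_4]
        · have e1 := key a ⟨h0, hm2, hm1v, h0v, h1v, h2v, h3v, h4v, hrec⟩ m h5
          have e2 := key (pa p H) hA m h5
          have hsum : ∑ j ∈ Finset.Icc (-1:ℤ) (m-1), a j * a (m-2-j)
              = ∑ j ∈ Finset.Icc (-1:ℤ) (m-1), pa p H j * pa p H (m-2-j) := by
            refine Finset.sum_congr rfl fun j hj => ?_
            simp only [Finset.mem_Icc] at hj
            rw [ih j (by omega), ih (m-2-j) (by omega)]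
          have hC : ((m:ℂ)*((m:ℂ)-1) - 12) ≠ 0 := by
            have : (m:ℂ)*((m:ℂ)-1) - 12 = ((m:ℂ)+3)*((m:ℂ)-4) := by ring
            rw [this]
            apply mul_ne_zero
            · have h3 : ((m+3 : ℤ) : ℂ) ≠ 0 := Int.cast_ne_zero.mpr (by omega)
              push_cast at h3; convert h3 using 1
            · have h4 : ((m-4 : ℤ) : ℂ) ≠ 0 := Int.cast_ne_zero.mpr (by omega)
              push_cast at h4; convert h4 using 1
          exact mul_left_cancel₀ hC (by rw [e1, hsum, ← e2])
  funext m
  exact main (m+2).toNat m (by omega)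
end

section
/- Let y : I \to \mathbb{C} be a twice continuously differentiable function on a real interval I, and for \lambda \ne 0 define the matrices A(\lambda,t) = (4\lambda^4 + t + 2y^2)\sigma_3 - i(4y\lambda^2 + t + 2y^2)\sigma_2 - (2y'\lambda + \frac{1}{2\lambda})\sigma_1 and B(\lambda,t) = (\lambda + \frac{y}{\lambda})\sigma_3 - \frac{iy}{\lambda}\sigma_2. Then the zero-curvature equation \partial_t A - \partial_\lambda B + [A, B] = 0 holds identically in \lambda (for all \lambda \ne 0) if and only if y satisfies the first Painlevé equation y'' = 6y^2 + t on I. -/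
set_option maxHeartbeats 1000000


open Complex Matrix

/-- Let `y : ℝ → ℂ` be twice continuously differentiable on an interval `I`, and for
`λ ≠ 0` let
`A(λ,t) = (4λ⁴ + t + 2y²) σ₃ - i (4yλ² + t + 2y²) σ₂ - (2y'λ + 1/(2λ)) σ₁` and
`B(λ,t) = (λ + y/λ) σ₃ - (i y/λ) σ₂` be the coefficient matrices of the Painlevé I
Lax pair.  Then the zero-curvature equation `∂ₜA - ∂_λB + [A,B] = 0` (entrywise)
holds identically for all `λ ≠ 0` and `t ∈ I` iff `y'' = 6y² + t` on `I`. -/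
theorem stmt_17 (I : Set ℝ) (y : ℝ → ℂ) (hy : ContDiff ℝ 2 y)
    (σ₁ σ₂ σ₃ : Matrix (Fin 2) (Fin 2) ℂ)
    (hσ₁ : σ₁ = !![0, 1; 1, 0]) (hσ₂ : σ₂ = !![0, -Complex.I; Complex.I, 0])
    (hσ₃ : σ₃ = !![1, 0; 0, -1])
    (A B : ℂ → ℝ → Matrix (Fin 2) (Fin 2) ℂ)
    (hA : ∀ lam : ℂ, ∀ t : ℝ,
      A lam t = (4 * lam ^ 4 + (t : ℂ) + 2 * y t ^ 2) • σ₃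
        - (Complex.I * (4 * y t * lam ^ 2 + (t : ℂ) + 2 * y t ^ 2)) • σ₂
        - (2 * deriv y t * lam + 1 / (2 * lam)) • σ₁)
    (hB : ∀ lam : ℂ, ∀ t : ℝ,
      B lam t = (lam + y t / lam) • σ₃ - (Complex.I * y t / lam) • σ₂) :
    (∀ lam : ℂ, lam ≠ 0 → ∀ t ∈ I, ∀ i j : Fin 2,
        deriv (fun τ : ℝ => A lam τ i j) t - deriv (fun μ : ℂ => B μ t i j) lam
          + (A lam t * B lam t - B lam t * A lam t) i j = 0) ↔
      ∀ t ∈ I, deriv (deriv y) t = 6 * y t ^ 2 + (t : ℂ) := by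
  have hy1 : Differentiable ℝ y := hy.differentiable (by norm_num)
  have hy2 : Differentiable ℝ (deriv y) :=
    (contDiff_succ_iff_deriv.mp
      (by exact_mod_cast hy : ContDiff ℝ ((1 : ℕ) + 1) y)).2.2.differentiable (by norm_num)
  have key : ∀ lam : ℂ, lam ≠ 0 → ∀ t : ℝ, ∀ i j : Fin 2,
      deriv (fun τ : ℝ => A lam τ i j) t - deriv (fun μ : ℂ => B μ t i j) lam
        + (A lam t * B lam t - B lam t * A lam t) i j
      = if i = j then 0 else 2 * lam * ((t : ℂ) + 6 * y t ^ 2 - deriv (deriv y) t) := by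
    intro lam hlam t i j
    have ht : HasDerivAt y (deriv y t) t := (hy1 t).hasDerivAt
    have ht' : HasDerivAt (deriv y) (deriv (deriv y) t) t := (hy2 t).hasDerivAt
    -- closed forms for the entries of A
    have eA00 : (fun τ : ℝ => A lam τ 0 0)
        = fun τ : ℝ => 4 * lam ^ 4 + (τ : ℂ) + 2 * (y τ * y τ) := by
      funext τ; rw [hA]; simp [hσ₁, hσ₂, hσ₃]; ring
    have eA01 : (fun τ : ℝ => A lam τ 0 1)
        = fun τ : ℝ => -(4 * y τ * lam ^ 2 + (τ : ℂ) + 2 * (y τ * y τ))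
            - (2 * deriv y τ * lam + 1 / (2 * lam)) := by
      funext τ; rw [hA]; simp [hσ₁, hσ₂, hσ₃]
      linear_combination (4 * y τ * lam ^ 2 + (τ : ℂ) + 2 * y τ ^ 2) * Complex.I_mul_I
    have eA10 : (fun τ : ℝ => A lam τ 1 0)
        = fun τ : ℝ => (4 * y τ * lam ^ 2 + (τ : ℂ) + 2 * (y τ * y τ))
            - (2 * deriv y τ * lam + 1 / (2 * lam)) := by
      funext τ; rw [hA]; simp [hσ₁, hσ₂, hσ₃]
      linear_combination (-(4 * y τ * lam ^ 2 + (τ : ℂ) + 2 * y τ ^ 2)) * Complex.I_mul_I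
    have eA11 : (fun τ : ℝ => A lam τ 1 1)
        = fun τ : ℝ => -(4 * lam ^ 4 + (τ : ℂ) + 2 * (y τ * y τ)) := by
      funext τ; rw [hA]; simp [hσ₁, hσ₂, hσ₃]; ring
    -- closed forms for the entries of B
    have eB00 : (fun μ : ℂ => B μ t 0 0) = fun μ : ℂ => μ + y t * μ⁻¹ := by
      funext μ; rw [hB]; simp [hσ₂, hσ₃]; ring
    have eB01 : (fun μ : ℂ => B μ t 0 1) = fun μ : ℂ => -(y t * μ⁻¹) := by
      funext μ; rw [hB]; simp [hσ₂, hσ₃]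
      linear_combination (y t * μ⁻¹) * Complex.I_mul_I
    have eB10 : (fun μ : ℂ => B μ t 1 0) = fun μ : ℂ => y t * μ⁻¹ := by
      funext μ; rw [hB]; simp [hσ₂, hσ₃]
      linear_combination (-(y t * μ⁻¹)) * Complex.I_mul_I
    have eB11 : (fun μ : ℂ => B μ t 1 1) = fun μ : ℂ => -(μ + y t * μ⁻¹) := by
      funext μ; rw [hB]; simp [hσ₂, hσ₃]; ring
    -- derivative building blocks
    have ha : HasDerivAt (fun τ : ℝ => 4 * lam ^ 4 + (τ : ℂ) + 2 * (y τ * y τ))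
        (1 + 4 * y t * deriv y t) t := by
      have H := ((hasDerivAt_const t ((4 : ℂ) * lam ^ 4)).add ofRealCLM.hasDerivAt).add
        ((ht.mul ht).const_mul 2)
      convert H using 2 <;> (try simp [Complex.ofRealCLM_apply]) <;> (try ring)
      all_goals rfl
    have hq : HasDerivAt (fun τ : ℝ => 4 * y τ * lam ^ 2 + (τ : ℂ) + 2 * (y τ * y τ))
        (4 * deriv y t * lam ^ 2 + 1 + 4 * y t * deriv y t) t := by
      have H := (((ht.const_mul 4).mul_const (lam ^ 2)).add ofRealCLM.hasDerivAt).add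
        ((ht.mul ht).const_mul 2)
      convert H using 2 <;> (try simp [Complex.ofRealCLM_apply]) <;> (try ring)
      all_goals rfl
    have hc : HasDerivAt (fun τ : ℝ => 2 * deriv y τ * lam + 1 / (2 * lam))
        (2 * deriv (deriv y) t * lam) t := by
      have H := ((ht'.const_mul 2).mul_const lam).add_const (1 / (2 * lam))
      convert H using 2 <;> ring
    have hr : HasDerivAt (fun μ : ℂ => y t * μ⁻¹) (y t * -(lam ^ 2)⁻¹) lam :=
      (hasDerivAt_inv hlam).const_mul (y t)
    have hp : HasDerivAt (fun μ : ℂ => μ + y t * μ⁻¹) (1 + y t * -(lam ^ 2)⁻¹) lam :=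
      (hasDerivAt_id lam).add hr
    -- point values of the entries
    have pA00 : A lam t 0 0 = 4 * lam ^ 4 + (t : ℂ) + 2 * (y t * y t) := congrFun eA00 t
    have pA01 : A lam t 0 1 = -(4 * y t * lam ^ 2 + (t : ℂ) + 2 * (y t * y t))
        - (2 * deriv y t * lam + 1 / (2 * lam)) := congrFun eA01 t
    have pA10 : A lam t 1 0 = (4 * y t * lam ^ 2 + (t : ℂ) + 2 * (y t * y t))
        - (2 * deriv y t * lam + 1 / (2 * lam)) := congrFun eA10 t
    have pA11 : A lam t 1 1 = -(4 * lam ^ 4 + (t : ℂ) + 2 * (y t * y t)) := congrFun eA11 t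
    have pB00 : B lam t 0 0 = lam + y t * lam⁻¹ := congrFun eB00 lam
    have pB01 : B lam t 0 1 = -(y t * lam⁻¹) := congrFun eB01 lam
    have pB10 : B lam t 1 0 = y t * lam⁻¹ := congrFun eB10 lam
    have pB11 : B lam t 1 1 = -(lam + y t * lam⁻¹) := congrFun eB11 lam
    have hinv : lam * lam⁻¹ = 1 := mul_inv_cancel₀ hlam
    -- the four entry identities
    fin_cases i <;> fin_cases j <;> simp only [Fin.zero_eta, Fin.mk_one]
    · rw [eA00, eB00, ha.deriv, hp.deriv]
      simp only [Matrix.sub_apply, Matrix.mul_apply, Fin.sum_univ_two,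
        pA00, pA01, pA10, pA11, pB00, pB01, pB10, pB11]
      simp only [if_true]
      linear_combination (-(4 * y t * deriv y t)) * hinv
    · rw [eA01, eB01, ((hq.fun_neg).fun_sub hc).deriv, hr.fun_neg.deriv]
      simp only [Matrix.sub_apply, Matrix.mul_apply, Fin.sum_univ_two,
        pA00, pA01, pA10, pA11, pB00, pB01, pB10, pB11]
      rw [if_neg (by decide)]
      linear_combination (1 + 4 * y t * deriv y t - 8 * y t * lam ^ 3 + 8 * y t ^ 2 * lam) * hinv
    · rw [eA10, eB10, (hq.fun_sub hc).deriv, hr.deriv]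
      simp only [Matrix.sub_apply, Matrix.mul_apply, Fin.sum_univ_two,
        pA00, pA01, pA10, pA11, pB00, pB01, pB10, pB11]
      rw [if_neg (by decide)]
      linear_combination (-(1 + 4 * y t * deriv y t + 8 * y t * lam ^ 3 - 8 * y t ^ 2 * lam)) * hinv
    · rw [eA11, eB11, ha.fun_neg.deriv, hp.fun_neg.deriv]
      simp only [Matrix.sub_apply, Matrix.mul_apply, Fin.sum_univ_two,
        pA00, pA01, pA10, pA11, pB00, pB01, pB10, pB11]
      simp only [if_true]
      linear_combination (4 * y t * deriv y t) * hinv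
  constructor
  · intro h t htI
    have h2 := (key 1 one_ne_zero t 0 1).symm.trans (h 1 one_ne_zero t htI 0 1)
    norm_num at h2
    linear_combination -h2
  · intro h lam hlam t htI i j
    rw [key lam hlam t i j]
    by_cases hij : i = j
    · simp [hij]
    · rw [if_neg hij, h t htI]; ring
end
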